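/- arXiv:math/0304192 — 7 statements merged into one kernel-verified Lean document; each statement's English description precedes it below -/
import Mathlib

section
/- Let K be a field of characteristic not 2, and let V = K^m with the bilinear form <x,y> = sum_k a_k x_k y_k where all a_k are nonzero. If v_1,...,v_n and w_1,...,w_n are vectors in V with <v_i,v_j> = <w_i,w_j> for all i,j, and if, with r = min(n,m), some r-by-r minor of the Gram matrix (<v_i,v_j>)_{i,j=1..n} is nonzero, then there exists an orthogonal transformation g of V (i.e., a linear map preserving the form) with w_i = g(v_i) for all i. -/
/-
Witt's extension theorem, proved with reflections: in characteristic not 2, if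
`B u u = B u' u' ≠ 0` then one of `u ± u'` is anisotropic, and one or two reflections carry `u`
to `u'` while fixing every vector orthogonal to both. Choosing an orthogonal basis of a
nondegenerate subspace and moving its vectors one at a time extends any isometric embedding of
that subspace to an isometry of the whole space.

A nonzero minor of size `min(n, dim V)` makes the corresponding vectors `v ∘ rows` linearly
independent and spanning all of the `v i` (either `rows` is a bijection or `v ∘ rows` is a basis);
hence their Gram matrix is nonsingular, Witt's theorem moves them to `w ∘ rows`, and the remaining
`v i` follow because the same holds on the `w` side.
-/

open Module Submodule Set

theorem mem_span_range_comp_of_min_le {K V ι κ : Type*} [Field K] [AddCommGroup V] [Module K V]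
    [FiniteDimensional K V] [Fintype ι] [Fintype κ] {x : ι → V} {f : κ → ι}
    (hli : LinearIndependent K (x ∘ f)) (hκ : min (Fintype.card ι) (finrank K V) ≤ Fintype.card κ)
    (i : ι) : x i ∈ span K (Set.range (x ∘ f)) := by
  rcases le_total (Fintype.card ι) (finrank K V) with h | h
  · have hf : Function.Injective f := hli.injective.of_comp
    obtain ⟨j, rfl⟩ := ((Fintype.bijective_iff_injective_and_card f).mpr
      ⟨hf, le_antisymm (Fintype.card_le_of_injective f hf) (min_eq_left h ▸ hκ)⟩).2 i
    exact subset_span ⟨j, rfl⟩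
  · rw [hli.span_eq_top_of_card_eq_finrank'
      (le_antisymm hli.fintype_card_le_finrank (min_eq_right h ▸ hκ))]
    trivial

namespace LinearMap.BilinForm

variable {K V : Type*} [Field K] [AddCommGroup V] [Module K V] {B : LinearMap.BilinForm K V}

theorem exists_isOrthogonal_reflection (hB : B.IsSymm) {z : V} (hz : B z z ≠ 0) :
    ∃ τ : V ≃ₗ[K] V, B.IsOrthogonal τ ∧ ∀ y c, B z z * c = 2 * B z y → τ y = y - c • z := by
  have hz' : IsReflective B z := ⟨.of_ne_zero hz, fun _ => (isUnit_iff_ne_zero.mpr hz).dvd⟩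
  refine ⟨Module.reflection (hz'.coroot_apply_self B),
    hz'.isOrthogonal_reflection B (isSymm_iff.mp hB), fun y c hc => ?_⟩
  rw [Module.reflection_apply,
    mul_left_cancel₀ hz ((hz'.apply_self_mul_coroot_apply B).trans hc.symm)]

theorem exists_isOrthogonal_map_eq (h2 : (2 : K) ≠ 0) (hB : B.IsSymm) {u u' : V}
    (hu : B u u ≠ 0) (huu' : B u u = B u' u') :
    ∃ g : V ≃ₗ[K] V, B.IsOrthogonal g ∧ g u = u' ∧ ∀ x, B u x = 0 → B u' x = 0 → g x = x := by
  have hu' : B u' u' ≠ 0 := huu' ▸ hu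
  have hsum : B (u - u') (u - u') + B (u + u') (u + u') = 2 * (2 * B u u) := by
    simp only [map_sub, map_add, LinearMap.sub_apply, LinearMap.add_apply, hB.eq u' u, ← huu']
    ring
  by_cases hd : B (u - u') (u - u') = 0
  · -- reflecting in `u + u'` sends `u` to `-u'`; reflecting in `u'` then fixes the sign
    obtain ⟨τ, hτ, hτu⟩ := exists_isOrthogonal_reflection hB (z := u + u')
      (by rw [hd, zero_add] at hsum; rw [hsum]; exact mul_ne_zero h2 (mul_ne_zero h2 hu))
    obtain ⟨ρ, hρ, hρu'⟩ := exists_isOrthogonal_reflection hB hu'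
    refine ⟨τ.trans ρ, fun x y => (hρ _ _).trans (hτ x y), ?_, fun x hux hu'x => ?_⟩
    · have h1 : τ u = -u' := by
        rw [hτu u 1 (by simp only [map_add, LinearMap.add_apply, hB.eq u' u, ← huu']; ring)]
        module
      rw [LinearEquiv.trans_apply, h1, hρu' (-u') (-2) (by rw [map_neg]; ring)]
      module
    · rw [LinearEquiv.trans_apply, hτu x 0 (by simp [hux, hu'x]), hρu' _ 0 (by simp [hu'x])]
      simp
  · obtain ⟨τ, hτ, hτu⟩ := exists_isOrthogonal_reflection hB hd
    refine ⟨τ, hτ, ?_, fun x hux hu'x => ?_⟩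
    · rw [hτu u 1 (by simp only [map_sub, LinearMap.sub_apply, hB.eq u' u, ← huu']; ring)]
      module
    · rw [hτu x 0 (by simp [hux, hu'x])]
      simp

theorem exists_isOrthogonal_map_eq_of_iIsOrtho (h2 : (2 : K) ≠ 0) (hB : B.IsSymm) {r : ℕ}
    {v w : Fin r → V} (hvw : ∀ i j, B (v i) (v j) = B (w i) (w j)) (hv : B.iIsOrtho v)
    (hvv : ∀ i, B (v i) (v i) ≠ 0) (S : Set V) (hS : ∀ i, ∀ s ∈ S, B (v i) s = 0 ∧ B (w i) s = 0) :
    ∃ g : V ≃ₗ[K] V, B.IsOrthogonal g ∧ (∀ s ∈ S, g s = s) ∧ ∀ i, g (v i) = w i := by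
  -- Fixing `S` lets the induction continue inside the orthogonal complement of `w 0`.
  induction r generalizing S with
  | zero => exact ⟨LinearEquiv.refl K V, fun _ _ => rfl, fun _ _ => rfl, finZeroElim⟩
  | succ r ih =>
    obtain ⟨g, hg, hg0, hgS⟩ := exists_isOrthogonal_map_eq h2 hB (hvv 0) (hvw 0 0)
    have hv0 : ∀ i : Fin r, B (v i.succ) (v 0) = 0 := fun i => hv (Fin.succ_ne_zero i)
    obtain ⟨g', hg', hg'S, hg'v⟩ := ih (v := fun i => g (v i.succ)) (w := fun i => w i.succ)
      (fun i j => (hg _ _).trans (hvw _ _))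
      (fun i j hij => (hg _ _).trans (hv (Fin.succ_injective _ |>.ne hij)))
      (fun i => (hg _ _).trans_ne (hvv _)) (insert (w 0) S) fun i s hs => by
        rcases hs with rfl | hs
        · exact ⟨by rw [← hg0, hg, hv0], by rw [← hvw, hv0]⟩
        · exact ⟨by rw [← hgS s (hS 0 s hs).1 (hS 0 s hs).2, hg, (hS i.succ s hs).1],
            (hS i.succ s hs).2⟩
    refine ⟨g.trans g', fun x y => (hg' _ _).trans (hg x y), fun s hs => ?_, Fin.cases ?_ hg'v⟩
    · rw [LinearEquiv.trans_apply, hgS s (hS 0 s hs).1 (hS 0 s hs).2, hg'S s (Or.inr hs)]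
    · rw [LinearEquiv.trans_apply, hg0, hg'S _ (Or.inl rfl)]

theorem exists_isOrthogonal_extension (h2 : (2 : K) ≠ 0) (hB : B.IsSymm) (U : Submodule K V)
    [FiniteDimensional K U] (hU : (B.restrict U).Nondegenerate) (σ : U →ₗ[K] V)
    (hσ : ∀ x y, B (σ x) (σ y) = B x y) :
    ∃ g : V ≃ₗ[K] V, B.IsOrthogonal g ∧ ∀ x : U, g x = σ x := by
  have : Invertible (2 : K) := invertibleOfNonzero h2
  obtain ⟨b, hb⟩ := exists_orthogonal_basis (B := B.restrict U) ⟨fun x y => hB.eq x y⟩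
  obtain ⟨g, hg, -, hgb⟩ := exists_isOrthogonal_map_eq_of_iIsOrtho h2 hB
    (v := fun i => (b i : V)) (w := fun i => σ (b i)) (fun i j => (hσ _ _).symm) hb
    (iIsOrtho.not_isOrtho_basis_self_of_nondegenerate hb hU) ∅ (by simp)
  exact ⟨g, hg, LinearMap.congr_fun (b.ext (f₁ := g.toLinearMap ∘ₗ U.subtype) hgb)⟩

section Gram

variable {ι : Type*} [Fintype ι]

theorem vecMul_of_apply (x y : ι → V) (c : ι → K) :
    Matrix.vecMul c (Matrix.of fun i j => B (x i) (y j)) = fun j => B (∑ i, c i • x i) (y j) := by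
  ext j
  simp [Matrix.vecMul, dotProduct]

variable [DecidableEq ι]

theorem eq_zero_of_apply_sum_smul_eq_zero {x y : ι → V}
    (hdet : (Matrix.of fun i j => B (x i) (y j)).det ≠ 0) {c : ι → K}
    (hc : ∀ j, B (∑ i, c i • x i) (y j) = 0) : c = 0 := by
  by_contra hc0
  exact hdet <| Matrix.exists_vecMul_eq_zero_iff.mp
    ⟨c, hc0, by rw [vecMul_of_apply]; exact funext hc⟩

theorem linearIndependent_of_det_ne_zero {x y : ι → V}
    (hdet : (Matrix.of fun i j => B (x i) (y j)).det ≠ 0) : LinearIndependent K x :=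
  Fintype.linearIndependent_iff.mpr fun c hc => congrFun <|
    eq_zero_of_apply_sum_smul_eq_zero hdet fun j => by rw [hc, map_zero, LinearMap.zero_apply]

theorem eq_zero_of_mem_span_of_apply_eq_zero {x y : ι → V}
    (hdet : (Matrix.of fun i j => B (x i) (y j)).det ≠ 0) {d : V} (hd : d ∈ span K (Set.range x))
    (hdy : ∀ j, B d (y j) = 0) : d = 0 := by
  obtain ⟨c, rfl⟩ := (mem_span_range_iff_exists_fun K).mp hd
  rw [eq_zero_of_apply_sum_smul_eq_zero hdet hdy]
  simp

theorem det_ne_zero_of_mem_span {x y : ι → V}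
    (hdet : (Matrix.of fun i j => B (x i) (y j)).det ≠ 0) (hy : ∀ j, y j ∈ span K (Set.range x)) :
    (Matrix.of fun i j => B (x i) (x j)).det ≠ 0 := by
  intro h0
  obtain ⟨c, hc0, hc⟩ := Matrix.exists_vecMul_eq_zero_iff.mpr h0
  rw [vecMul_of_apply] at hc
  refine hc0 (eq_zero_of_apply_sum_smul_eq_zero hdet fun j => ?_)
  have hker : span K (Set.range x) ≤ ker (B (∑ i, c i • x i)) :=
    span_le.mpr (range_subset_iff.mpr (congrFun hc))
  exact hker (hy j)

theorem exists_isOrthogonal_map_eq_of_det_ne_zero (h2 : (2 : K) ≠ 0) (hB : B.IsSymm)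
    {v w : ι → V} (hvw : ∀ i j, B (v i) (v j) = B (w i) (w j))
    (hdet : (Matrix.of fun i j => B (v i) (v j)).det ≠ 0) :
    ∃ g : V ≃ₗ[K] V, B.IsOrthogonal g ∧ ∀ i, g (v i) = w i := by
  have hli := linearIndependent_of_det_ne_zero hdet
  let b := Basis.span hli
  have hb : ∀ i, (b i : V) = v i := fun i => congrArg Subtype.val (Basis.span_apply hli i)
  have : FiniteDimensional K (span K (Set.range v)) :=
    FiniteDimensional.span_of_finite K (Set.finite_range v)
  have hU : (B.restrict (span K (Set.range v))).Nondegenerate := by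
    refine (nondegenerate_iff_det_ne_zero b).mpr ?_
    convert hdet using 2
    ext i j
    simp [hb]
  have hσ : B.compl₁₂ (b.constr K w) (b.constr K w) = B.restrict (span K (Set.range v)) :=
    ext_basis b fun i j => by simp [hb, hvw]
  obtain ⟨g, hg, hgσ⟩ := exists_isOrthogonal_extension h2 hB _ hU (b.constr K w)
    (LinearMap.congr_fun₂ hσ)
  exact ⟨g, hg, fun i => by simpa [hb] using hgσ (b i)⟩

end Gram

theorem exists_isOrthogonal_map_eq_of_det_minor_ne_zero [FiniteDimensional K V]
    (h2 : (2 : K) ≠ 0) (hB : B.IsSymm) {n r : ℕ} {v w : Fin n → V}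
    (hvw : ∀ i j, B (v i) (v j) = B (w i) (w j)) {rows cols : Fin r → Fin n}
    (hr : min n (finrank K V) ≤ r)
    (hdet : (Matrix.of fun i j => B (v (rows i)) (v (cols j))).det ≠ 0) :
    ∃ g : V ≃ₗ[K] V, B.IsOrthogonal g ∧ ∀ i, g (v i) = w i := by
  have hdetw : (Matrix.of fun i j => B (w (rows i)) (w (cols j))).det ≠ 0 := by
    simpa only [hvw] using hdet
  have hv : ∀ i, v i ∈ span K (Set.range (v ∘ rows)) :=
    mem_span_range_comp_of_min_le (linearIndependent_of_det_ne_zero hdet) (by simpa using hr)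
  have hw : ∀ i, w i ∈ span K (Set.range (w ∘ rows)) :=
    mem_span_range_comp_of_min_le (linearIndependent_of_det_ne_zero hdetw) (by simpa using hr)
  have hgram : (Matrix.of fun i j => B (v (rows i)) (v (rows j))).det ≠ 0 :=
    det_ne_zero_of_mem_span hdet fun j => hv (cols j)
  obtain ⟨g, hg, hgv⟩ := exists_isOrthogonal_map_eq_of_det_ne_zero h2 hB
    (v := fun j => v (rows j)) (w := fun j => w (rows j)) (fun i j => hvw _ _) hgram
  -- `g (v i) - w i` lies in the span of `w ∘ rows` and is orthogonal to it
  refine ⟨g, hg, fun i => ?_⟩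
  have hgvi : g (v i) ∈ span K (Set.range (w ∘ rows)) := by
    have hrange : Set.range (w ∘ rows) = g '' Set.range (v ∘ rows) := by
      rw [← Set.range_comp]
      exact congrArg Set.range (funext fun j => (hgv j).symm)
    rw [hrange]
    exact apply_mem_span_image_of_mem_span (g : V →ₗ[K] V) (hv i)
  rw [← sub_eq_zero]
  refine eq_zero_of_mem_span_of_apply_eq_zero (x := fun j => w (rows j))
    (y := fun j => w (rows j)) (by simpa only [hvw] using hgram) (sub_mem hgvi (hw i)) fun j => ?_
  have hgij := hg (v i) (v (rows j))
  rw [hgv j, hvw] at hgij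
  rw [map_sub, LinearMap.sub_apply, hgij, sub_self]

end LinearMap.BilinForm

theorem stmt2_general {K : Type*} [Field K] (h2 : (2 : K) ≠ 0) {m n : ℕ}
    (a : Fin m → K)
    (B : (Fin m → K) → (Fin m → K) → K)
    (hB : ∀ x y, B x y = ∑ k, a k * x k * y k)
    (v w : Fin n → Fin m → K)
    (hvw : ∀ i j, B (v i) (v j) = B (w i) (w j))
    (hminor : ∃ rows cols : Fin (min n m) → Fin n,
      (Matrix.of fun i j => B (v (rows i)) (v (cols j))).det ≠ 0) :
    ∃ g : (Fin m → K) ≃ₗ[K] (Fin m → K),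
      (∀ x y, B (g x) (g y) = B x y) ∧ ∀ i, w i = g (v i) := by
  obtain ⟨rows, cols, hdet⟩ := hminor
  set Bd := (Matrix.diagonal a).toBilin'
  have hBd : ∀ x y, Bd x y = B x y := fun x y => by
    simp only [Bd, Matrix.toBilin'_apply', Matrix.mulVec_diagonal, dotProduct, hB]
    exact Finset.sum_congr rfl fun k _ => by ring
  have hsymm : Bd.IsSymm := ⟨fun x y => by
    simp only [hBd, hB]
    exact Finset.sum_congr rfl fun k _ => by ring⟩
  simp only [← hBd] at hvw hdet
  obtain ⟨g, hg, hgv⟩ := LinearMap.BilinForm.exists_isOrthogonal_map_eq_of_det_minor_ne_zero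
    h2 hsymm hvw (by rw [Module.finrank_fin_fun]) hdet
  exact ⟨g, fun x y => by simpa only [hBd] using hg x y, fun i => (hgv i).symm⟩

theorem stmt2 {K : Type*} [Field K] (h2 : (2 : K) ≠ 0) {m n : ℕ}
    (a : Fin m → K) (ha : ∀ k, a k ≠ 0)
    (B : (Fin m → K) → (Fin m → K) → K)
    (hB : ∀ x y, B x y = ∑ k, a k * x k * y k)
    (v w : Fin n → Fin m → K)
    (hvw : ∀ i j, B (v i) (v j) = B (w i) (w j))
    (hminor : ∃ rows cols : Fin (min n m) → Fin n,
      (Matrix.of fun i j => B (v (rows i)) (v (cols j))).det ≠ 0) :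
    ∃ g : (Fin m → K) ≃ₗ[K] (Fin m → K),
      (∀ x y, B (g x) (g y) = B x y) ∧ ∀ i, w i = g (v i) :=
  stmt2_general h2 a B hB v w hvw hminor
end

section
/- Let P_1,...,P_n be points in R^m with squared distances whose associated matrix (d_{i,j} - d_{i,n} - d_{j,n})_{i,j=1..n-1} has rank r = min(n-1, m), and suppose all pairwise squared distances d_{i,j} (for i<j) are distinct. Then there exists a neighborhood N of (P_1,...,P_n) in (R^m)^n such that any two n-point configurations in N lie in the same orbit under the Euclidean group AO(m) if and only if they have the same multiset of squared pairwise distances. -/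
/-!
Squared distances that are pairwise distinct stay well separated under a small perturbation of
the configuration, so for two nearby configurations with the same multiset of squared distances
each value of one multiset can only be matched with the value of the same pair in the other:
the two configurations are congruent. In a finite-dimensional Euclidean space congruent families
are related by an ambient isometry, because equal distances give equal Gram matrices of the
difference vectors, and a linear isometry between their spans extends to the whole space.
-/

/-- The multiset of squared pairwise distances of an `n`-point configuration in `ℝ^m`. -/
noncomputable def sqDistMultiset {n m : ℕ} (P : Fin n → EuclideanSpace ℝ (Fin m)) : Multiset ℝ :=
  ((Finset.univ : Finset (Fin n × Fin n)).filter fun p => p.1 < p.2).val.map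
    fun p => dist (P p.1) (P p.2) ^ 2

open Filter
open scoped Topology Congruent InnerProductSpace

section InnerProductSpace

variable {𝕜 V ι : Type*} [RCLike 𝕜] [NormedAddCommGroup V] [InnerProductSpace 𝕜 V] [Fintype ι]

theorem norm_linearCombination_eq_of_inner_eq {u v : ι → V}
    (h : ∀ i j, ⟪u i, u j⟫_𝕜 = ⟪v i, v j⟫_𝕜) (c : ι → 𝕜) :
    ‖Fintype.linearCombination 𝕜 u c‖ = ‖Fintype.linearCombination 𝕜 v c‖ := by
  have key : ⟪Fintype.linearCombination 𝕜 u c, Fintype.linearCombination 𝕜 u c⟫_𝕜 =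
      ⟪Fintype.linearCombination 𝕜 v c, Fintype.linearCombination 𝕜 v c⟫_𝕜 := by
    simp only [Fintype.linearCombination_apply, sum_inner, inner_sum, inner_smul_left,
      inner_smul_right, h]
  rw [inner_self_eq_norm_sq_to_K, inner_self_eq_norm_sq_to_K] at key
  exact (sq_eq_sq₀ (norm_nonneg _) (norm_nonneg _)).1 (by exact_mod_cast key)

theorem exists_linearIsometryEquiv_of_inner_eq [FiniteDimensional 𝕜 V] {u v : ι → V}
    (h : ∀ i j, ⟪u i, u j⟫_𝕜 = ⟪v i, v j⟫_𝕜) :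
    ∃ G : V ≃ₗᵢ[𝕜] V, ∀ i, G (u i) = v i := by
  classical
  set φ := Fintype.linearCombination 𝕜 u
  set ψ := Fintype.linearCombination 𝕜 v
  have hnorm := norm_linearCombination_eq_of_inner_eq h
  have hker : LinearMap.ker φ ≤ LinearMap.ker ψ := fun c hc => by
    rw [LinearMap.mem_ker, ← norm_eq_zero, ← hnorm, norm_eq_zero]
    exact hc
  let L₀ : LinearMap.range φ →ₗ[𝕜] V :=
    (LinearMap.ker φ).liftQ ψ hker ∘ₗ φ.quotKerEquivRange.symm.toLinearMap
  have hL₀ : ∀ c, L₀ ⟨φ c, LinearMap.mem_range_self φ c⟩ = ψ c := fun c => by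
    simp [L₀, LinearMap.quotKerEquivRange_symm_apply_image]
  let L : LinearMap.range φ →ₗᵢ[𝕜] V :=
    ⟨L₀, by rintro ⟨_, c, rfl⟩; rw [hL₀]; exact (hnorm c).symm⟩
  refine ⟨L.extend.toLinearIsometryEquiv rfl, fun i => ?_⟩
  have hu : φ (Pi.single i 1) = u i := by simp [φ, Fintype.linearCombination_apply_single]
  have hv : ψ (Pi.single i 1) = v i := by simp [ψ, Fintype.linearCombination_apply_single]
  rw [← hu, ← hv, ← hL₀]
  exact L.extend_apply ⟨φ (Pi.single i 1), LinearMap.mem_range_self φ _⟩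

end InnerProductSpace

theorem Congruent.exists_isometryEquiv {E ι : Type*} [NormedAddCommGroup E]
    [InnerProductSpace ℝ E] [FiniteDimensional ℝ E] [Fintype ι] {Q R : ι → E} (h : Q ≅ R) :
    ∃ g : E ≃ᵢ E, ∀ i, R i = g (Q i) := by
  rcases isEmpty_or_nonempty ι with _ | ⟨⟨i₀⟩⟩
  · exact ⟨IsometryEquiv.refl E, isEmptyElim⟩
  obtain ⟨G, hG⟩ := exists_linearIsometryEquiv_of_inner_eq (𝕜 := ℝ)
    (u := fun i => Q i - Q i₀) (v := fun i => R i - R i₀) fun i j => by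
      simp only [real_inner_eq_norm_mul_self_add_norm_mul_self_sub_norm_sub_mul_self_div_two,
        sub_sub_sub_cancel_right, ← dist_eq_norm, h.dist_eq]
  refine ⟨(IsometryEquiv.subRight (Q i₀)).trans
    (G.toIsometryEquiv.trans (IsometryEquiv.addRight (R i₀))), fun i => ?_⟩
  simp [hG]

section Separation

variable {α X : Type*} [MetricSpace X]

theorem Finset.exists_pos_le_dist_of_injOn (S : Finset α) {d : α → X} (hd : Set.InjOn d S) :
    ∃ δ > 0, ∀ p ∈ S, ∀ q ∈ S, p ≠ q → δ ≤ dist (d p) (d q) := by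
  have hev : ∀ᶠ δ in 𝓝[>] (0 : ℝ), 0 < δ ∧ ∀ pq ∈ S.offDiag, δ ≤ dist (d pq.1) (d pq.2) := by
    refine eventually_mem_nhdsWithin.and ((eventually_all_finset _).2 fun pq hpq => ?_)
    rw [Finset.mem_offDiag] at hpq
    exact nhdsWithin_le_nhds
      (eventually_le_nhds (dist_pos.2 fun h => hpq.2.2 (hd hpq.1 hpq.2.1 h)))
  obtain ⟨δ, hδ, hsep⟩ := hev.exists
  exact ⟨δ, hδ, fun p hp q hq hpq => hsep (p, q) (Finset.mem_offDiag.2 ⟨hp, hq, hpq⟩)⟩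

theorem Finset.exists_pos_eqOn_of_map_eq (S : Finset α) {d : α → X} (hd : Set.InjOn d S) :
    ∃ ε > 0, ∀ f g : α → X, (∀ p ∈ S, dist (f p) (d p) < ε) →
      (∀ p ∈ S, dist (g p) (d p) < ε) → S.val.map f = S.val.map g → Set.EqOn f g S := by
  obtain ⟨δ, hδ, hsep⟩ := S.exists_pos_le_dist_of_injOn hd
  refine ⟨δ / 2, half_pos hδ, fun f g hf hg hfg p hp => ?_⟩
  have hfilter : ∀ f : α → X, (∀ q ∈ S, dist (f q) (d q) < δ / 2) →
      (S.val.map f).filter (fun x => dist x (d p) < δ / 2) = {f p} := by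
    intro f hf
    have hS : S.filter ((fun x => dist x (d p) < δ / 2) ∘ f) = {p} := by
      refine Finset.eq_singleton_iff_unique_mem.2
        ⟨Finset.mem_filter.2 ⟨hp, hf p hp⟩, fun q hq => ?_⟩
      obtain ⟨hqS, hqp : dist (f q) (d p) < δ / 2⟩ := Finset.mem_filter.1 hq
      by_contra hne
      have := dist_triangle_left (d q) (d p) (f q)
      linarith [hsep q hqS p hp hne, hf q hqS]
    rw [Multiset.filter_map, ← Finset.filter_val, hS]
    rfl
  exact Multiset.singleton_inj.1 (by rw [← hfilter f hf, ← hfilter g hg, hfg])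

end Separation

theorem sqDistMultiset_eq_of_congruent {n m : ℕ} {Q R : Fin n → EuclideanSpace ℝ (Fin m)}
    (h : Q ≅ R) : sqDistMultiset Q = sqDistMultiset R :=
  Multiset.map_congr rfl fun p _ => by rw [h.dist_eq]

theorem exists_mem_nhds_congruent_of_sqDistMultiset_eq {n m : ℕ}
    (P : Fin n → EuclideanSpace ℝ (Fin m))
    (hP : Set.InjOn (fun p : Fin n × Fin n => dist (P p.1) (P p.2) ^ 2) {p | p.1 < p.2}) :
    ∃ N ∈ 𝓝 P, ∀ Q ∈ N, ∀ R ∈ N, sqDistMultiset Q = sqDistMultiset R → Q ≅ R := by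
  let S := (Finset.univ : Finset (Fin n × Fin n)).filter fun p => p.1 < p.2
  let sqDist (Q : Fin n → EuclideanSpace ℝ (Fin m)) (p : Fin n × Fin n) : ℝ :=
    dist (Q p.1) (Q p.2) ^ 2
  obtain ⟨ε, hε, hS⟩ := S.exists_pos_eqOn_of_map_eq (d := sqDist P) (by simpa [S] using hP)
  have hcont : ∀ p, Continuous fun Q => sqDist Q p := fun p =>
    ((continuous_apply p.1).dist (continuous_apply p.2)).pow 2
  refine ⟨{Q | ∀ p ∈ S, dist (sqDist Q p) (sqDist P p) < ε},
    (eventually_all_finset S).2 fun p _ =>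
      ((hcont p).tendsto P).eventually (Metric.ball_mem_nhds _ hε), ?_⟩
  intro Q hQ R hR hQR
  have hsq := hS (sqDist Q) (sqDist R) hQ hR hQR
  have hlt : ∀ i j, i < j → dist (Q i) (Q j) = dist (R i) (R j) := fun i j hij =>
    (sq_eq_sq₀ dist_nonneg dist_nonneg).1 (@hsq (i, j) (by simp [S, hij]))
  refine congruent_iff_pairwise_dist_eq.2 fun i j hij => ?_
  rcases hij.lt_or_gt with h | h
  · exact hlt i j h
  · rw [dist_comm, hlt j i h, dist_comm]

theorem stmt7_general {n m : ℕ} (P : Fin (n + 1) → EuclideanSpace ℝ (Fin m))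
    (d : Fin (n + 1) → Fin (n + 1) → ℝ)
    (hd : ∀ i j, d i j = dist (P i) (P j) ^ 2)
    (hdistinct : ∀ i j k l : Fin (n + 1), i < j → k < l →
        d i j = d k l → i = k ∧ j = l) :
    ∃ N ∈ nhds P, ∀ Q ∈ N, ∀ R ∈ N,
      ((∃ g : EuclideanSpace ℝ (Fin m) ≃ᵢ EuclideanSpace ℝ (Fin m),
          ∀ i, (R : Fin (n + 1) → EuclideanSpace ℝ (Fin m)) i = g (Q i)) ↔
        sqDistMultiset Q = sqDistMultiset R) := by
  have hP : Set.InjOn (fun p : Fin (n + 1) × Fin (n + 1) => dist (P p.1) (P p.2) ^ 2)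
      {p | p.1 < p.2} := by
    rintro ⟨i, j⟩ hij ⟨k, l⟩ hkl h
    obtain ⟨rfl, rfl⟩ := hdistinct i j k l hij hkl (by simpa only [hd] using h)
    rfl
  obtain ⟨N, hN, hcongr⟩ := exists_mem_nhds_congruent_of_sqDistMultiset_eq P hP
  refine ⟨N, hN, fun Q hQ R hR => ⟨?_, fun h => (hcongr Q hQ R hR h).exists_isometryEquiv⟩⟩
  rintro ⟨g, hg⟩
  refine sqDistMultiset_eq_of_congruent (congruent_iff_dist_eq.2 fun i j => ?_)
  rw [hg, hg, g.dist_eq]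

theorem stmt7 {n m : ℕ} (P : Fin (n + 1) → EuclideanSpace ℝ (Fin m))
    (d : Fin (n + 1) → Fin (n + 1) → ℝ)
    (hd : ∀ i j, d i j = dist (P i) (P j) ^ 2)
    (hrank : (Matrix.of fun i j : Fin n =>
        d i.castSucc j.castSucc - d i.castSucc (Fin.last n)
          - d j.castSucc (Fin.last n)).rank = min n m)
    (hdistinct : ∀ i j k l : Fin (n + 1), i < j → k < l →
        d i j = d k l → i = k ∧ j = l) :
    ∃ N ∈ nhds P, ∀ Q ∈ N, ∀ R ∈ N,
      ((∃ g : EuclideanSpace ℝ (Fin m) ≃ᵢ EuclideanSpace ℝ (Fin m),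
          ∀ i, (R : Fin (n + 1) → EuclideanSpace ℝ (Fin m)) i = g (Q i)) ↔
        sqDistMultiset Q = sqDistMultiset R) :=
  stmt7_general P d hd hdistinct
end

section
/- Let P_1,...,P_n be points in R^m such that the matrix (d_{i,j} - d_{i,n} - d_{j,n})_{i,j=1..n-1} formed from the squared distances has rank r = min(n-1, m). Then there exists epsilon > 0 such that every n-point configuration Q_1,...,Q_n in R^m with ||(Q_1,...,Q_n) - (P_1,...,P_n)|| < epsilon and with the same multiset of squared pairwise distances as P_1,...,P_n lies in the same AO(m)-orbit as P_1,...,P_n. -/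
open Finset in
lemma finset_sep (s : Finset ℝ) : ∃ δ > 0, ∀ a ∈ s, ∀ b ∈ s, |a - b| < δ → a = b := by
  classical
  set t : Finset ℝ := ((s ×ˢ s).filter fun p => p.1 ≠ p.2).image fun p => |p.1 - p.2| with ht
  by_cases hte : t.Nonempty
  · refine ⟨t.min' hte, ?_, ?_⟩
    · obtain ⟨p, hp, hpe⟩ := Finset.mem_image.1 (t.min'_mem hte)
      have : p.1 ≠ p.2 := (Finset.mem_filter.1 hp).2
      rw [← hpe]
      exact abs_sub_pos.2 this
    · intro a ha b hb hab
      by_contra hne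
      have : |a - b| ∈ t := Finset.mem_image.2 ⟨(a, b), Finset.mem_filter.2
        ⟨Finset.mem_product.2 ⟨ha, hb⟩, hne⟩, rfl⟩
      exact absurd (t.min'_le _ this) (not_le.2 hab)
  · refine ⟨1, one_pos, fun a ha b hb _ => ?_⟩
    by_contra hne
    exact hte ⟨|a - b|, Finset.mem_image.2 ⟨(a, b), Finset.mem_filter.2
      ⟨Finset.mem_product.2 ⟨ha, hb⟩, hne⟩, rfl⟩⟩


open scoped RealInnerProductSpace

lemma congruent_of_dist_eq {n m : ℕ} (P Q : Fin (n + 1) → EuclideanSpace ℝ (Fin m))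
    (h : ∀ i j, dist (Q i) (Q j) = dist (P i) (P j)) :
    ∃ g : EuclideanSpace ℝ (Fin m) ≃ᵢ EuclideanSpace ℝ (Fin m), ∀ i, Q i = g (P i) := by
  classical
  set o : Fin (n + 1) := Fin.last n
  set u : Fin (n + 1) → EuclideanSpace ℝ (Fin m) := fun i => P i - P o with hu
  set w : Fin (n + 1) → EuclideanSpace ℝ (Fin m) := fun i => Q i - Q o with hw
  have hnu : ∀ i, ‖u i‖ = dist (P i) (P o) := fun i => (dist_eq_norm _ _).symm
  have hnw : ∀ i, ‖w i‖ = dist (Q i) (Q o) := fun i => (dist_eq_norm _ _).symm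
  have hnuu : ∀ i j, ‖u i - u j‖ = dist (P i) (P j) := by
    intro i j; rw [hu]; simp only [sub_sub_sub_cancel_right]; exact (dist_eq_norm _ _).symm
  have hnww : ∀ i j, ‖w i - w j‖ = dist (Q i) (Q j) := by
    intro i j; rw [hw]; simp only [sub_sub_sub_cancel_right]; exact (dist_eq_norm _ _).symm
  have hinner : ∀ i j, ⟪w i, w j⟫ = ⟪u i, u j⟫ := by
    intro i j
    have h1 := norm_sub_sq_real (u i) (u j)
    have h2 := norm_sub_sq_real (w i) (w j)
    rw [hnuu, hnu, hnu] at h1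
    rw [hnww, hnw, hnw, h, h, h] at h2
    linarith
  -- linear maps from coefficient space
  let T : (Fin (n + 1) → ℝ) →ₗ[ℝ] EuclideanSpace ℝ (Fin m) :=
    { toFun := fun c => ∑ i, c i • u i
      map_add' := by intro a b; simp [add_smul, Finset.sum_add_distrib]
      map_smul' := by intro r a; simp [smul_smul, Finset.smul_sum] }
  let T' : (Fin (n + 1) → ℝ) →ₗ[ℝ] EuclideanSpace ℝ (Fin m) :=
    { toFun := fun c => ∑ i, c i • w i
      map_add' := by intro a b; simp [add_smul, Finset.sum_add_distrib]
      map_smul' := by intro r a; simp [smul_smul, Finset.smul_sum] }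
  have hgram : ∀ c, ⟪T' c, T' c⟫ = ⟪T c, T c⟫ := by
    intro c
    show ⟪∑ i, c i • w i, ∑ i, c i • w i⟫ = ⟪∑ i, c i • u i, ∑ i, c i • u i⟫
    rw [sum_inner, sum_inner]
    refine Finset.sum_congr rfl fun i _ => ?_
    rw [inner_sum, inner_sum]
    refine Finset.sum_congr rfl fun j _ => ?_
    rw [real_inner_smul_left, real_inner_smul_left, real_inner_smul_right,
      real_inner_smul_right, hinner]
  have hnormT : ∀ c, ‖T' c‖ = ‖T c‖ := by
    intro c
    have := hgram c
    rw [real_inner_self_eq_norm_sq, real_inner_self_eq_norm_sq] at this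
    exact (sq_eq_sq₀ (norm_nonneg _) (norm_nonneg _)).1 this
  have hker : LinearMap.ker T ≤ LinearMap.ker T' := by
    intro c hc
    rw [LinearMap.mem_ker] at hc ⊢
    have := hnormT c
    rw [hc, norm_zero, norm_eq_zero] at this
    exact this
  let e := T.quotKerEquivRange
  let L : LinearMap.range T →ₗ[ℝ] EuclideanSpace ℝ (Fin m) :=
    (Submodule.liftQ (LinearMap.ker T) T' hker).comp e.symm.toLinearMap
  have hL : ∀ c, L ⟨T c, LinearMap.mem_range_self T c⟩ = T' c := by
    intro c
    have he : e (Submodule.Quotient.mk c) = ⟨T c, LinearMap.mem_range_self T c⟩ :=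
      Subtype.ext (T.quotKerEquivRange_apply_mk c)
    have : e.symm ⟨T c, LinearMap.mem_range_self T c⟩ = Submodule.Quotient.mk c := by
      rw [← he, LinearEquiv.symm_apply_apply]
    show (Submodule.liftQ (LinearMap.ker T) T' hker) (e.symm _) = T' c
    rw [this, Submodule.liftQ_apply]
  have hLnorm : ∀ x : LinearMap.range T, ‖L x‖ = ‖x‖ := by
    rintro ⟨x, hx⟩
    obtain ⟨c, rfl⟩ := hx
    rw [hL c, hnormT]
    rfl
  let Liso : LinearMap.range T →ₗᵢ[ℝ] EuclideanSpace ℝ (Fin m) := ⟨L, hLnorm⟩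
  let Lext : EuclideanSpace ℝ (Fin m) →ₗᵢ[ℝ] EuclideanSpace ℝ (Fin m) := Liso.extend
  let Leq : EuclideanSpace ℝ (Fin m) ≃ₗᵢ[ℝ] EuclideanSpace ℝ (Fin m) := Lext.toLinearIsometryEquiv rfl
  refine ⟨((IsometryEquiv.subRight (P o)).trans Leq.toIsometryEquiv).trans
    (IsometryEquiv.addRight (Q o)), fun i => ?_⟩
  have hmem : u i ∈ LinearMap.range T := by
    refine ⟨Pi.single i 1, ?_⟩
    show (∑ j, Pi.single i 1 j • u j) = u i
    rw [Finset.sum_eq_single i]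
    · simp
    · intro j _ hj; rw [Pi.single_eq_of_ne hj, zero_smul]
    · simp
  have hval : Lext (u i) = w i := by
    have h1 : Lext ((⟨u i, hmem⟩ : LinearMap.range T) : EuclideanSpace ℝ (Fin m)) = Liso ⟨u i, hmem⟩ :=
      Liso.extend_apply ⟨u i, hmem⟩
    have h2 : Liso (⟨u i, hmem⟩ : LinearMap.range T) = w i := by
      show L ⟨u i, hmem⟩ = w i
      have : (⟨u i, hmem⟩ : LinearMap.range T)
          = ⟨T (Pi.single i 1), LinearMap.mem_range_self T _⟩ := by
        apply Subtype.ext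
        show u i = ∑ j, Pi.single i 1 j • u j
        rw [Finset.sum_eq_single i]
        · simp
        · intro j _ hj; rw [Pi.single_eq_of_ne hj, zero_smul]
        · simp
      rw [this, hL]
      show (∑ j, Pi.single i 1 j • w j) = w i
      rw [Finset.sum_eq_single i]
      · simp
      · intro j _ hj; rw [Pi.single_eq_of_ne hj, zero_smul]
      · simp
    exact h1.trans h2
  show Q i = Leq (P i - P o) + Q o
  have : Leq (P i - P o) = Lext (u i) := rfl
  rw [this, hval, hw]
  simp


set_option maxHeartbeats 1000000 in
theorem stmt8 {n m : ℕ} (P : Fin (n + 1) → EuclideanSpace ℝ (Fin m))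
    (d : Fin (n + 1) → Fin (n + 1) → ℝ)
    (hd : ∀ i j, d i j = dist (P i) (P j) ^ 2)
    (hrank : (Matrix.of fun i j : Fin n =>
        d i.castSucc j.castSucc - d i.castSucc (Fin.last n)
          - d j.castSucc (Fin.last n)).rank = min n m) :
    ∃ ε > 0, ∀ Q : Fin (n + 1) → EuclideanSpace ℝ (Fin m),
      dist Q P < ε → sqDistMultiset Q = sqDistMultiset P →
      ∃ g : EuclideanSpace ℝ (Fin m) ≃ᵢ EuclideanSpace ℝ (Fin m),
        ∀ i, Q i = g (P i) := by
  classical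
  set D : Finset ℝ :=
    Finset.image (fun p : Fin (n + 1) × Fin (n + 1) => dist (P p.1) (P p.2) ^ 2)
      Finset.univ with hD
  obtain ⟨δ, hδ, hsep⟩ := finset_sep D
  obtain ⟨C, hC0, hbC⟩ : ∃ C : ℝ, 0 ≤ C ∧ ∀ i j, dist (P i) (P j) ≤ C := by
    refine ⟨∑ p : Fin (n + 1) × Fin (n + 1), dist (P p.1) (P p.2),
      Finset.sum_nonneg fun _ _ => dist_nonneg, fun i j => ?_⟩
    have h := Finset.single_le_sum (f := fun p : Fin (n+1) × Fin (n+1) => dist (P p.1) (P p.2))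
      (s := Finset.univ) (fun _ _ => dist_nonneg) (a := (i, j)) (Finset.mem_univ (i, j))
    simpa using h
  clear hd hrank d
  set K : ℝ := 4 * C + 4 with hK
  have hK0 : 0 < K := by linarith
  refine ⟨min 1 (δ / (K + 1)), lt_min one_pos (by positivity), fun Q hQd hQmult => ?_⟩
  have hε1 : dist Q P < 1 := lt_of_lt_of_le hQd (min_le_left _ _)
  have hε2 : dist Q P < δ / (K + 1) := lt_of_lt_of_le hQd (min_le_right _ _)
  have hclose : ∀ i j, |dist (Q i) (Q j) ^ 2 - dist (P i) (P j) ^ 2| < δ := by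
    intro i j
    set a := dist (Q i) (Q j)
    set b := dist (P i) (P j)
    have ha0 : 0 ≤ a := dist_nonneg
    have hb0 : 0 ≤ b := dist_nonneg
    have hi : dist (Q i) (P i) ≤ dist Q P := dist_le_pi_dist Q P i
    have hj : dist (Q j) (P j) ≤ dist Q P := dist_le_pi_dist Q P j
    have h1 : a ≤ b + 2 * dist Q P := by
      calc a ≤ dist (Q i) (P i) + dist (P i) (P j) + dist (P j) (Q j) :=
            dist_triangle4 _ _ _ _
        _ ≤ dist Q P + b + dist Q P := by
            rw [dist_comm (P j) (Q j)]; gcongr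
        _ = b + 2 * dist Q P := by ring
    have h2 : b ≤ a + 2 * dist Q P := by
      calc b ≤ dist (P i) (Q i) + dist (Q i) (Q j) + dist (Q j) (P j) :=
            dist_triangle4 _ _ _ _
        _ ≤ dist Q P + a + dist Q P := by
            rw [dist_comm (P i) (Q i)]; gcongr
        _ = a + 2 * dist Q P := by ring
    have hbc : b ≤ C := hbC i j
    have hd0 : 0 ≤ dist Q P := dist_nonneg
    have habs : |a ^ 2 - b ^ 2| = |a - b| * (a + b) := by
      rw [← abs_of_nonneg (by linarith : (0:ℝ) ≤ a + b), ← abs_mul]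
      ring_nf
    have hab : |a - b| ≤ 2 * dist Q P := abs_sub_le_iff.2 ⟨by linarith, by linarith⟩
    have hsum : a + b ≤ 2 * C + 2 := by nlinarith
    have hle : |a ^ 2 - b ^ 2| ≤ 2 * dist Q P * (2 * C + 2) := by
      rw [habs]
      exact mul_le_mul hab hsum (by linarith) (by linarith)
    have hKd : 2 * dist Q P * (2 * C + 2) < δ := by
      have : dist Q P * (K + 1) < δ := by
        rw [← lt_div_iff₀ (by linarith)]
        exact hε2
      nlinarith
    linarith
  -- squared distances of Q agree with those of P
  have hsq : ∀ i j, dist (Q i) (Q j) ^ 2 = dist (P i) (P j) ^ 2 := by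
    have key : ∀ i j : Fin (n + 1), i < j → dist (Q i) (Q j) ^ 2 = dist (P i) (P j) ^ 2 := by
      intro i j hij
      have hmemQ : dist (Q i) (Q j) ^ 2 ∈ sqDistMultiset Q := by
        refine Multiset.mem_map.2 ⟨(i, j), ?_, rfl⟩
        rw [Finset.mem_val]
        exact Finset.mem_filter.2 ⟨Finset.mem_univ _, hij⟩
      rw [hQmult] at hmemQ
      obtain ⟨p, _, hpe⟩ := Multiset.mem_map.1 hmemQ
      have hqD : dist (Q i) (Q j) ^ 2 ∈ D := by
        rw [← hpe]
        exact Finset.mem_image.2 ⟨p, Finset.mem_univ _, rfl⟩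
      have hpD : dist (P i) (P j) ^ 2 ∈ D :=
        Finset.mem_image.2 ⟨(i, j), Finset.mem_univ _, rfl⟩
      exact hsep _ hqD _ hpD (hclose i j)
    intro i j
    rcases lt_trichotomy i j with hij | hij | hij
    · exact key i j hij
    · subst hij; simp
    · rw [dist_comm (Q i) (Q j), dist_comm (P i) (P j)]
      exact key j i hij
  have hdist : ∀ i j, dist (Q i) (Q j) = dist (P i) (P j) := fun i j =>
    (sq_eq_sq₀ dist_nonneg dist_nonneg).1 (hsq i j)
  exact congruent_of_dist_eq P Q hdist
end

section
/- For every n-point configuration P_1,...,P_n in R^m whose pairwise squared distances are all distinct, there is a neighborhood N of (P_1,...,P_n) in (R^m)^n such that two configurations in N lie in the same Euclidean-group orbit if and only if they have the same multiset of squared pairwise distances. -/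
open scoped RealInnerProductSpace

local notation "E" => EuclideanSpace ℝ (Fin _)

/-- Two finite configurations with the same pairwise distances are related by an isometry. -/
lemma exists_isometry_of_dist_eq {n m : ℕ} (Q R : Fin n → EuclideanSpace ℝ (Fin m))
    (h : ∀ i j, dist (Q i) (Q j) = dist (R i) (R j)) :
    ∃ g : EuclideanSpace ℝ (Fin m) ≃ᵢ EuclideanSpace ℝ (Fin m), ∀ i, R i = g (Q i) := by
  rcases Nat.eq_zero_or_pos n with hn | hn
  · exact ⟨IsometryEquiv.refl _, fun i => absurd i.2 (by omega)⟩
  have i0 : Fin n := ⟨0, hn⟩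
  set u : Fin n → EuclideanSpace ℝ (Fin m) := fun i => Q i - Q i0 with hu
  set w : Fin n → EuclideanSpace ℝ (Fin m) := fun i => R i - R i0 with hw
  have hnorm : ∀ i, ‖u i‖ = ‖w i‖ := by
    intro i
    simp only [hu, hw, ← dist_eq_norm]
    exact h i i0
  have hnorm2 : ∀ i j, ‖u i - u j‖ = ‖w i - w j‖ := by
    intro i j
    have h1 : u i - u j = Q i - Q j := by simp only [hu, hw]; abel
    have h2 : w i - w j = R i - R j := by simp only [hu, hw]; abel
    rw [h1, h2, ← dist_eq_norm, ← dist_eq_norm]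
    exact h i j
  have hG : ∀ i j, ⟪u i, u j⟫ = ⟪w i, w j⟫ := by
    intro i j
    have h1 := @norm_sub_sq_real (EuclideanSpace ℝ (Fin m)) _ _ (u i) (u j)
    have h2 := @norm_sub_sq_real (EuclideanSpace ℝ (Fin m)) _ _ (w i) (w j)
    have e1 : ‖u i‖ ^ 2 = ‖w i‖ ^ 2 := by rw [hnorm i]
    have e2 : ‖u j‖ ^ 2 = ‖w j‖ ^ 2 := by rw [hnorm j]
    have e3 : ‖u i - u j‖ ^ 2 = ‖w i - w j‖ ^ 2 := by rw [hnorm2 i j]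
    linarith
  let A : (Fin n → ℝ) →ₗ[ℝ] EuclideanSpace ℝ (Fin m) :=
    { toFun := fun c => ∑ i, c i • u i
      map_add' := by intro x y; simp [add_smul, Finset.sum_add_distrib]
      map_smul' := by intro r x; simp [smul_smul, Finset.smul_sum] }
  let B : (Fin n → ℝ) →ₗ[ℝ] EuclideanSpace ℝ (Fin m) :=
    { toFun := fun c => ∑ i, c i • w i
      map_add' := by intro x y; simp [add_smul, Finset.sum_add_distrib]
      map_smul' := by intro r x; simp [smul_smul, Finset.smul_sum] }
  have keynorm : ∀ c : Fin n → ℝ, ‖A c‖ = ‖B c‖ := by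
    intro c
    have hA : ⟪A c, A c⟫ = ∑ i, ∑ j, c i * c j * ⟪u j, u i⟫ := by
      simp only [A, LinearMap.coe_mk, AddHom.coe_mk, sum_inner, inner_sum,
        real_inner_smul_left, real_inner_smul_right]
      refine Finset.sum_congr rfl fun i _ => Finset.sum_congr rfl fun j _ => by ring
    have hB : ⟪B c, B c⟫ = ∑ i, ∑ j, c i * c j * ⟪w j, w i⟫ := by
      simp only [B, LinearMap.coe_mk, AddHom.coe_mk, sum_inner, inner_sum,
        real_inner_smul_left, real_inner_smul_right]
      refine Finset.sum_congr rfl fun i _ => Finset.sum_congr rfl fun j _ => by ring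
    have hAB : ⟪A c, A c⟫ = ⟪B c, B c⟫ := by
      rw [hA, hB]
      exact Finset.sum_congr rfl fun i _ => Finset.sum_congr rfl fun j _ => by rw [hG]
    rw [@norm_eq_sqrt_real_inner (EuclideanSpace ℝ (Fin m)),
      @norm_eq_sqrt_real_inner (EuclideanSpace ℝ (Fin m)), hAB]
  have hker : LinearMap.ker A ≤ LinearMap.ker B := by
    intro c hc
    rw [LinearMap.mem_ker] at hc ⊢
    have hc2 := keynorm c
    rw [hc, norm_zero] at hc2
    exact norm_eq_zero.mp hc2.symm
  let φq : ((Fin n → ℝ) ⧸ LinearMap.ker A) →ₗ[ℝ] EuclideanSpace ℝ (Fin m) :=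
    (LinearMap.ker A).liftQ B hker
  let e := A.quotKerEquivRange
  let φlin : LinearMap.range A →ₗ[ℝ] EuclideanSpace ℝ (Fin m) := φq ∘ₗ e.symm.toLinearMap
  have hφlin : ∀ (c : Fin n → ℝ) (hc : A c ∈ LinearMap.range A),
      φlin ⟨A c, hc⟩ = B c := by
    intro c hc
    have hs : e.symm ⟨A c, hc⟩ = Submodule.Quotient.mk c :=
      A.quotKerEquivRange_symm_apply_image c hc
    simp only [φlin, LinearMap.comp_apply, LinearEquiv.coe_toLinearMap, hs]
    exact Submodule.liftQ_apply _ B c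
  let φ : LinearMap.range A →ₗᵢ[ℝ] EuclideanSpace ℝ (Fin m) :=
    { toLinearMap := φlin
      norm_map' := by
        rintro ⟨x, hx⟩
        obtain ⟨c, rfl⟩ := hx
        rw [hφlin c (LinearMap.mem_range_self A c)]
        exact ((keynorm c).symm : ‖B c‖ = ‖A c‖) }
  let g0 : EuclideanSpace ℝ (Fin m) →ₗᵢ[ℝ] EuclideanSpace ℝ (Fin m) := φ.extend
  have hsurj : Function.Surjective g0.toLinearMap :=
    LinearMap.surjective_of_injective g0.injective
  let geq := LinearIsometryEquiv.ofSurjective g0 hsurj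
  have hgeq : ∀ x, geq x = g0 x := fun x =>
    congrFun (LinearIsometryEquiv.coe_ofSurjective g0 hsurj) x
  have humem : ∀ i, u i ∈ LinearMap.range A := by
    intro i
    refine ⟨Pi.single i 1, ?_⟩
    show ∑ j, Pi.single i 1 j • u j = u i
    simp [Pi.single_apply, ite_smul]
  have hBu : ∀ i, B (Pi.single i 1) = w i := by
    intro i
    show ∑ j, Pi.single i 1 j • w j = w i
    simp [Pi.single_apply, ite_smul]
  have hg0u : ∀ i, g0 (u i) = w i := by
    intro i
    have hx : g0 ((⟨u i, humem i⟩ : LinearMap.range A) : EuclideanSpace ℝ (Fin m)) =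
        φ ⟨u i, humem i⟩ := φ.extend_apply ⟨u i, humem i⟩
    rw [show ((⟨u i, humem i⟩ : LinearMap.range A) : EuclideanSpace ℝ (Fin m)) = u i from rfl]
      at hx
    rw [hx]
    have heq : (⟨u i, humem i⟩ : LinearMap.range A) =
        ⟨A (Pi.single i 1), LinearMap.mem_range_self A _⟩ := by
      apply Subtype.ext
      show u i = ∑ j, Pi.single i 1 j • u j
      simp [Pi.single_apply, ite_smul]
    rw [heq]
    show φlin _ = w i
    rw [hφlin _ (LinearMap.mem_range_self A _), hBu]
  refine ⟨((IsometryEquiv.subRight (Q i0)).trans geq.toIsometryEquiv).trans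
      (IsometryEquiv.addRight (R i0)), fun i => ?_⟩
  simp only [IsometryEquiv.trans_apply, IsometryEquiv.subRight_apply,
    IsometryEquiv.addRight_apply, LinearIsometryEquiv.coe_toIsometryEquiv]
  rw [hgeq, show Q i - Q i0 = u i from rfl, hg0u]
  simp [hw]

theorem stmt9 {n m : ℕ} (P : Fin n → EuclideanSpace ℝ (Fin m))
    (hdistinct : ∀ i j k l : Fin n, i < j → k < l →
        dist (P i) (P j) ^ 2 = dist (P k) (P l) ^ 2 → i = k ∧ j = l) :
    ∃ N ∈ nhds P, ∀ Q ∈ N, ∀ R ∈ N,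
      ((∃ g : EuclideanSpace ℝ (Fin m) ≃ᵢ EuclideanSpace ℝ (Fin m),
          ∀ i, (R : Fin n → EuclideanSpace ℝ (Fin m)) i = g (Q i)) ↔
        sqDistMultiset Q = sqDistMultiset R) := by
  classical
  set s : Finset (Fin n × Fin n) :=
    (Finset.univ : Finset (Fin n × Fin n)).filter fun p => p.1 < p.2 with hs
  set v : Fin n × Fin n → ℝ := fun p => dist (P p.1) (P p.2) ^ 2 with hv
  have hvinj : ∀ p ∈ s, ∀ q ∈ s, v p = v q → p = q := by
    intro p hp q hq hpq
    simp only [hs, Finset.mem_filter] at hp hq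
    obtain ⟨h1, h2⟩ := hdistinct p.1 p.2 q.1 q.2 hp.2 hq.2 hpq
    exact Prod.ext h1 h2
  -- gap
  set t : Finset ℝ :=
    ((s ×ˢ s).filter fun pq => pq.1 ≠ pq.2).image fun pq => |v pq.1 - v pq.2| with ht
  set ε : ℝ := if htne : t.Nonempty then t.min' htne / 3 else 1 with hε
  have hεpos : 0 < ε := by
    rw [hε]
    split_ifs with htne
    · have hmem := t.min'_mem htne
      obtain ⟨⟨p, q⟩, hfil, heq⟩ := Finset.mem_image.mp hmem
      obtain ⟨hprod, hne⟩ := Finset.mem_filter.mp hfil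
      obtain ⟨hp, hq⟩ := Finset.mem_product.mp hprod
      have : v p ≠ v q := fun habs => hne (hvinj p hp q hq habs)
      have : 0 < |v p - v q| := abs_pos.mpr (sub_ne_zero.mpr this)
      linarith [this.trans_eq heq]
    · norm_num
  have hgap : ∀ p ∈ s, ∀ q ∈ s, p ≠ q → 3 * ε ≤ |v p - v q| := by
    intro p hp q hq hne
    have hmem : |v p - v q| ∈ t := by
      rw [ht]
      exact Finset.mem_image.mpr ⟨(p, q), Finset.mem_filter.mpr
        ⟨Finset.mem_product.mpr ⟨hp, hq⟩, hne⟩, rfl⟩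
    have htne : t.Nonempty := ⟨_, hmem⟩
    rw [hε, dif_pos htne]
    have := t.min'_le _ hmem
    linarith
  -- the neighborhood
  set N : Set (Fin n → EuclideanSpace ℝ (Fin m)) :=
    {Q | ∀ p ∈ s, |dist (Q p.1) (Q p.2) ^ 2 - v p| < ε} with hN
  have hNnhds : N ∈ nhds P := by
    have : ∀ᶠ Q in nhds P, ∀ p ∈ s, |dist (Q p.1) (Q p.2) ^ 2 - v p| < ε := by
      rw [Filter.eventually_all_finset]
      intro p hp
      have hcont : Continuous fun Q : Fin n → EuclideanSpace ℝ (Fin m) =>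
          dist (Q p.1) (Q p.2) ^ 2 :=
        (Continuous.dist (continuous_apply p.1) (continuous_apply p.2)).pow 2
      have htend : Filter.Tendsto (fun Q : Fin n → EuclideanSpace ℝ (Fin m) =>
          dist (Q p.1) (Q p.2) ^ 2) (nhds P) (nhds (v p)) := hcont.continuousAt
      have := htend (Metric.ball_mem_nhds (v p) hεpos)
      filter_upwards [this] with Q hQ
      simpa [Real.dist_eq] using hQ
    exact this
  refine ⟨N, hNnhds, fun Q hQ R hR => ⟨fun ⟨g, hg⟩ => ?_, fun hmul => ?_⟩⟩
  · -- isometry ⇒ same multiset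
    unfold sqDistMultiset
    apply Multiset.map_congr rfl
    intro p hp
    rw [hg p.1, hg p.2, g.dist_eq]
  · -- same multiset ⇒ isometry
    have key : ∀ p ∈ s, dist (Q p.1) (Q p.2) ^ 2 = dist (R p.1) (R p.2) ^ 2 := by
      intro p hp
      have hmemR : dist (R p.1) (R p.2) ^ 2 ∈ sqDistMultiset Q := by
        rw [hmul]
        unfold sqDistMultiset
        exact Multiset.mem_map.mpr ⟨p, hp, rfl⟩
      unfold sqDistMultiset at hmemR
      obtain ⟨q, hq, hqeq⟩ := Multiset.mem_map.mp hmemR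
      have hq' : q ∈ s := hq
      have h1 : |dist (Q q.1) (Q q.2) ^ 2 - v q| < ε := hQ q hq'
      have h2 : |dist (R p.1) (R p.2) ^ 2 - v p| < ε := hR p hp
      have h3 : |dist (Q p.1) (Q p.2) ^ 2 - v p| < ε := hQ p hp
      by_cases hpq : q = p
      · rw [hpq] at hqeq; exact hqeq
      · exfalso
        have := hgap q hq' p hp hpq
        rw [hqeq] at h1
        have h4 : |v q - v p| ≤ |v q - dist (R p.1) (R p.2) ^ 2|
            + |dist (R p.1) (R p.2) ^ 2 - v p| := abs_sub_le _ _ _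
        rw [abs_sub_comm (v q) (dist (R p.1) (R p.2) ^ 2)] at h4
        linarith [hgap q hq' p hp hpq]
    have hdd : ∀ i j, dist (Q i) (Q j) = dist (R i) (R j) := by
      intro i j
      rcases lt_trichotomy i j with hij | hij | hij
      · have := key (i, j) (Finset.mem_filter.mpr ⟨Finset.mem_univ _, hij⟩)
        exact (sq_eq_sq₀ dist_nonneg dist_nonneg).mp this
      · rw [hij]; simp
      · have := key (j, i) (Finset.mem_filter.mpr ⟨Finset.mem_univ _, hij⟩)
        rw [dist_comm (Q i), dist_comm (R i)]
        exact (sq_eq_sq₀ dist_nonneg dist_nonneg).mp this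
    exact exists_isometry_of_dist_eq Q R hdd
end

section
/- Let v_1,...,v_n and w_1,...,w_n be vectors in an m-dimensional vector space V over a field K, with n >= m, such that det(v_{i_1},...,v_{i_m}) = det(w_{i_1},...,w_{i_m}) for all 1 <= i_1 < ... < i_m <= n. If at least one of these determinants is nonzero, then there exists phi in SL(V) with w_i = phi(v_i) for all i. -/
/-!
Both sides of the hypothesis are alternating in the index tuple, so the identity extends from
increasing tuples to all tuples. For a tuple `s` with `det (v ∘ s) ≠ 0`, the families `v ∘ s` and
`w ∘ s` are bases with the same determinant, so the linear map carrying one to the other has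
determinant `1`. By Cramer's rule the coordinates of `v i` in the first basis and of `w i` in the
second are quotients of determinants of tuples drawn from `v`, resp. `w`, hence agree, and the
map carries `v i` to `w i`.
-/

open Function

theorem AlternatingMap.apply_comp_eq_of_forall_strictMono {R M N : Type*} [Semiring R]
    [AddCommMonoid M] [Module R M] [AddCommGroup N] [Module R N] {m : ℕ}
    (f : M [⋀^Fin m]→ₗ[R] N) {α : Type*} [LinearOrder α] {v w : α → M}
    (h : ∀ s : Fin m → α, StrictMono s → f (v ∘ s) = f (w ∘ s)) (s : Fin m → α) :
    f (v ∘ s) = f (w ∘ s) := by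
  by_cases hs : Injective s
  · have hsort : StrictMono (s ∘ Tuple.sort s) :=
      (Tuple.monotone_sort s).strictMono_of_injective (hs.comp (Tuple.sort s).injective)
    apply MulAction.injective (Equiv.Perm.sign (Tuple.sort s))
    simpa only [← f.map_perm, ← comp_assoc] using h _ hsort
  · rw [f.map_eq_zero_of_not_injective _ fun h ↦ hs h.of_comp,
      f.map_eq_zero_of_not_injective _ fun h ↦ hs h.of_comp]

namespace Module.Basis

variable {R M ι : Type*} [CommRing R] [AddCommGroup M] [Module R M] [Fintype ι] [DecidableEq ι]
  (b : Basis ι R M)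

noncomputable def ofIsUnitDet {v : ι → M} (h : IsUnit (b.det v)) : Basis ι R M :=
  .mk (b.is_basis_iff_det.2 h).1 (b.is_basis_iff_det.2 h).2.ge

@[simp]
theorem coe_ofIsUnitDet {v : ι → M} (h : IsUnit (b.det v)) : ⇑(b.ofIsUnitDet h) = v :=
  coe_mk _ _

theorem det_mul_coord (e : Basis ι R M) (j : ι) (x : M) :
    b.det e * e.coord j x = b.det (update e j x) := by
  have hmk : Basis.mk e.linearIndependent e.span_eq.ge = e := eq_of_apply_eq fun _ ↦ by simp
  have hcramer := LinearMap.congr_fun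
    (b.det_smul_mk_coord_eq_det_update e.linearIndependent e.span_eq.ge j) x
  rwa [hmk] at hcramer

variable {b} {e e' : Basis ι R M}

theorem det_equiv_eq_one_of_det_eq (h : b.det e = b.det e') :
    LinearMap.det (e.equiv e' (Equiv.refl ι) : M →ₗ[R] M) = 1 := by
  rw [det_basis]
  refine (b.isUnit_det e).mul_left_cancel ?_
  rw [det_mul_det, mul_one, h]

theorem equiv_apply_eq_of_det_update_eq (h : b.det e = b.det e') {x x' : M}
    (hx : ∀ j, b.det (update e j x) = b.det (update e' j x')) :
    e.equiv e' (Equiv.refl ι) x = x' := by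
  refine e'.ext_elem fun j ↦ (b.isUnit_det e).mul_left_cancel ?_
  have hrepr : e'.repr (e.equiv e' (Equiv.refl ι) x) j = e.repr x j := by
    simp [Basis.equiv]
  rw [hrepr, ← coord_apply, ← coord_apply, det_mul_coord, h, det_mul_coord]
  exact hx j

end Module.Basis

theorem stmt11_general {K : Type*} [Field K] {V : Type*} [AddCommGroup V] [Module K V]
    {m n : ℕ} (b : Module.Basis (Fin m) K V)
    (v w : Fin n → V)
    (hdet : ∀ s : Fin m → Fin n, StrictMono s → b.det (v ∘ s) = b.det (w ∘ s))
    (hnz : ∃ s : Fin m → Fin n, StrictMono s ∧ b.det (v ∘ s) ≠ 0) :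
    ∃ φ : V ≃ₗ[K] V, LinearMap.det (φ : V →ₗ[K] V) = 1 ∧ ∀ i, w i = φ (v i) := by
  obtain ⟨s, -, hv⟩ := hnz
  have hdet_all := b.det.apply_comp_eq_of_forall_strictMono hdet
  have hw : b.det (w ∘ s) ≠ 0 := hdet_all s ▸ hv
  let e := b.ofIsUnitDet hv.isUnit
  let e' := b.ofIsUnitDet hw.isUnit
  have he : b.det e = b.det e' := by simpa [e, e'] using hdet_all s
  refine ⟨e.equiv e' (Equiv.refl _), Module.Basis.det_equiv_eq_one_of_det_eq he,
    fun i ↦ (Module.Basis.equiv_apply_eq_of_det_update_eq he fun j ↦ ?_).symm⟩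
  simpa [e, e', ← comp_update] using hdet_all (update s j i)

theorem stmt11 {K : Type*} [Field K] {V : Type*} [AddCommGroup V] [Module K V]
    {m n : ℕ} (hmn : m ≤ n) (b : Module.Basis (Fin m) K V)
    (v w : Fin n → V)
    (hdet : ∀ s : Fin m → Fin n, StrictMono s → b.det (v ∘ s) = b.det (w ∘ s))
    (hnz : ∃ s : Fin m → Fin n, StrictMono s ∧ b.det (v ∘ s) ≠ 0) :
    ∃ φ : V ≃ₗ[K] V, LinearMap.det (φ : V →ₗ[K] V) = 1 ∧ ∀ i, w i = φ (v i) :=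
  stmt11_general b v w hdet hnz
end

section
/- The two 5-point configurations in R^2 given by P = ((0,0),(1,0),(1,1),(3,1),(5,1)) and Q = ((1,0),(2,0),(2,1),(2,2),(4,2)) have the same multiset of squared signed areas a_{i,j,k}^2 over all 1 <= i < j < k <= 5, but there is no affine map of determinant plus-or-minus 1 composed with a translation, together with a permutation of indices, carrying P onto Q. -/
/-- Twice the signed area of the triangle `P i`, `P j`, `P k` in the plane. -/
def signedArea {n : ℕ} (P : Fin n → Fin 2 → ℝ) (i j k : Fin n) : ℝ :=
  (P j 0 - P i 0) * (P k 1 - P i 1) - (P j 1 - P i 1) * (P k 0 - P i 0)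

/-- The multiset of squared signed areas of all triangles `i < j < k`. -/
def sqAreaMultiset {n : ℕ} (P : Fin n → Fin 2 → ℝ) : Multiset ℝ :=
  ((Finset.univ : Finset (Fin n × Fin n × Fin n)).filter
      fun p => p.1 < p.2.1 ∧ p.2.1 < p.2.2).val.map
    fun p => signedArea P p.1 p.2.1 p.2.2 ^ 2

/-- Integer version of `signedArea`. -/
def zSA (M : Fin 5 → Fin 2 → ℤ) (i j k : Fin 5) : ℤ :=
  (M j 0 - M i 0) * (M k 1 - M i 1) - (M j 1 - M i 1) * (M k 0 - M i 0)

def PZ : Fin 5 → Fin 2 → ℤ := ![![0,0], ![1,0], ![1,1], ![3,1], ![5,1]]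
def QZ : Fin 5 → Fin 2 → ℤ := ![![1,0], ![2,0], ![2,1], ![2,2], ![4,2]]

lemma castSA (M : Fin 5 → Fin 2 → ℤ) (i j k : Fin 5) :
    signedArea (fun a b => ((M a b : ℤ) : ℝ)) i j k = ((zSA M i j k : ℤ) : ℝ) := by
  simp only [signedArea, zSA]
  push_cast
  ring

lemma key : ∀ a0 a1 a2 a3 : Fin 5, a0 ≠ a1 → a0 ≠ a2 → a0 ≠ a3 → a1 ≠ a2 → a1 ≠ a3 →
    a2 ≠ a3 → zSA PZ a1 a2 a3 ^ 2 = zSA QZ 1 2 3 ^ 2 →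
    zSA PZ a0 a1 a2 ^ 2 = zSA QZ 0 1 2 ^ 2 → False := by decide

lemma zmulti_eq :
    (((Finset.univ : Finset (Fin 5 × Fin 5 × Fin 5)).filter
      fun p => p.1 < p.2.1 ∧ p.2.1 < p.2.2).val.map
        fun p => zSA PZ p.1 p.2.1 p.2.2 ^ 2) =
    (((Finset.univ : Finset (Fin 5 × Fin 5 × Fin 5)).filter
      fun p => p.1 < p.2.1 ∧ p.2.1 < p.2.2).val.map
        fun p => zSA QZ p.1 p.2.1 p.2.2 ^ 2) := by decide

lemma multi_cast (Z : Fin 5 → Fin 2 → ℤ) :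
    sqAreaMultiset (fun a b => ((Z a b : ℤ) : ℝ)) =
    Multiset.map (fun z : ℤ => (z : ℝ))
      (((Finset.univ : Finset (Fin 5 × Fin 5 × Fin 5)).filter
        fun p => p.1 < p.2.1 ∧ p.2.1 < p.2.2).val.map
          fun p => zSA Z p.1 p.2.1 p.2.2 ^ 2) := by
  rw [sqAreaMultiset, Multiset.map_map]
  refine Multiset.map_congr rfl ?_
  intro p _
  simp only [Function.comp_apply, castSA]
  push_cast
  ring

theorem stmt13 (P Q : Fin 5 → Fin 2 → ℝ)
    (hP : P = ![![0,0], ![1,0], ![1,1], ![3,1], ![5,1]])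
    (hQ : Q = ![![1,0], ![2,0], ![2,1], ![2,2], ![4,2]]) :
    sqAreaMultiset P = sqAreaMultiset Q ∧
    ¬ ∃ (φ : (Fin 2 → ℝ) ≃ₗ[ℝ] (Fin 2 → ℝ)) (v : Fin 2 → ℝ) (π : Equiv.Perm (Fin 5)),
        (LinearMap.det (φ : (Fin 2 → ℝ) →ₗ[ℝ] (Fin 2 → ℝ)) = 1 ∨
         LinearMap.det (φ : (Fin 2 → ℝ) →ₗ[ℝ] (Fin 2 → ℝ)) = -1) ∧
        ∀ i, Q i = φ (P (π i) + v) := by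
  have hPc : P = fun a b => ((PZ a b : ℤ) : ℝ) := by
    subst hP; funext a b
    fin_cases a <;> fin_cases b <;> norm_num [PZ]
  have hQc : Q = fun a b => ((QZ a b : ℤ) : ℝ) := by
    subst hQ; funext a b
    fin_cases a <;> fin_cases b <;> norm_num [QZ]
  constructor
  · rw [hPc, hQc, multi_cast, multi_cast, zmulti_eq]
  · rintro ⟨φ, v, π, hdet, hQP⟩
    set L : (Fin 2 → ℝ) →ₗ[ℝ] (Fin 2 → ℝ) := (φ : (Fin 2 → ℝ) →ₗ[ℝ] (Fin 2 → ℝ)) with hL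
    set M : Matrix (Fin 2) (Fin 2) ℝ := LinearMap.toMatrix' L with hM
    have hDdet : M.det = LinearMap.det L := by rw [hM, LinearMap.det_toMatrix']
    have hD : M 0 0 * M 1 1 - M 0 1 * M 1 0 = LinearMap.det L := by
      rw [← hDdet, Matrix.det_fin_two]
    have hd2 : (M 0 0 * M 1 1 - M 0 1 * M 1 0) ^ 2 = 1 := by
      rw [hD]
      rcases hdet with h | h <;> rw [← hL] at * <;> rw [h] <;> norm_num
    have happ : ∀ (x : Fin 2 → ℝ) (c : Fin 2), φ x c = M c 0 * x 0 + M c 1 * x 1 := by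
      intro x c
      have h1 : (φ x : Fin 2 → ℝ) = Matrix.toLin' M x := by
        rw [hM, Matrix.toLin'_toMatrix']; rfl
      rw [h1, Matrix.toLin'_apply]
      simp [Matrix.mulVec, dotProduct, Fin.sum_univ_two]
    have harea : ∀ i j k : Fin 5, zSA PZ (π i) (π j) (π k) ^ 2 = zSA QZ i j k ^ 2 := by
      intro i j k
      have e1 : signedArea Q i j k =
          (M 0 0 * M 1 1 - M 0 1 * M 1 0) * signedArea P (π i) (π j) (π k) := by
        simp only [signedArea, hQP i, hQP j, hQP k, happ, Pi.add_apply]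
        ring
      have e2 : signedArea Q i j k ^ 2 = signedArea P (π i) (π j) (π k) ^ 2 := by
        rw [e1, mul_pow, hd2, one_mul]
      rw [hPc, hQc, castSA, castSA] at e2
      exact_mod_cast e2.symm
    have hinj : Function.Injective π := π.injective
    have hne : ∀ a b : Fin 5, a ≠ b → π a ≠ π b := fun a b h hc => h (hinj hc)
    exact key (π 0) (π 1) (π 2) (π 3)
      (hne 0 1 (by decide)) (hne 0 2 (by decide)) (hne 0 3 (by decide))
      (hne 1 2 (by decide)) (hne 1 3 (by decide)) (hne 2 3 (by decide))
      (harea 1 2 3) (harea 0 1 2)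
end

section
/- Every 4-point configuration in R^2 in which not all four points are collinear is reconstructible from areas up to the equi-affine group: if Q_1,...,Q_4 in R^2 have the same multiset of squared signed areas {a_{i,j,k}^2 : 1<=i<j<k<=4} as P_1,...,P_4, then there exist a permutation pi of {1,2,3,4}, a linear map phi with det(phi) = plus-or-minus 1, and a vector v with Q_i = phi(P_{pi(i)} + v) for all i. -/
/-!
For four points `R 0, …, R 3` of the plane, the signed areas `c m` of the triangles opposite
the points, suitably oriented, satisfy `∑ c m = 0` and `∑ c m • R m = 0`, and the squared areas
of the configuration are the `c m ^ 2`. If `P` and `Q` have the same squared areas, then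
`c Q = ± c P` up to a relabelling: by `∑ c = 0`, the entries whose signs differ either vanish or
come in a pair `c i = - c j`, which a transposition absorbs. Relabelling `P` multiplies `c P` by
the sign of the permutation, so after relabelling `c Q = δ • c P` with `δ = ±1`. For `m` with
`c P m ≠ 0` the triangle opposite `P m` is nondegenerate, and the affine map taking it to the
triangle opposite `Q m` has determinant `δ`. It also takes `P m` to `Q m`, since both
configurations satisfy the affine relation `∑ c P i • X i = 0`, whose coefficient at `m` is
nonzero.
-/

section

open Finset

theorem exists_perm_comp_eq_of_map_univ_eq {α β : Type*} [Fintype α] [DecidableEq β]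
    {f g : α → β} (h : univ.val.map f = univ.val.map g) :
    ∃ σ : Equiv.Perm α, f ∘ σ = g := by
  have hfiber (c : β) : Fintype.card {a // g a = c} = Fintype.card {a // f a = c} := by
    simpa [Multiset.count_map, Fintype.card_subtype, eq_comm, ← filter_val,
      ← card_def] using congrArg (Multiset.count c) h.symm
  exact ⟨Equiv.ofFiberEquiv fun c => Fintype.equivOfCardEq (hfiber c),
    funext (Equiv.ofFiberEquiv_map _)⟩

theorem exists_perm_eq_mul_of_sq_eq {s t : Fin 4 → ℝ} (hs : ∑ i, s i = 0)
    (ht : ∑ i, t i = 0) (h : ∀ i, t i ^ 2 = s i ^ 2) :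
    ∃ (τ : Equiv.Perm (Fin 4)) (ε : ℝ), (ε = 1 ∨ ε = -1) ∧ ∀ i, t i = ε * s (τ i) := by
  simp only [Fin.sum_univ_four] at hs ht
  have hsign (i : Fin 4) : t i = s i ∨ t i = -s i := sq_eq_sq_iff_eq_or_eq_neg.mp (h i)
  -- The entries where `t` and `s` differ sum to zero in `s`: a single one vanishes, three leave
  -- a vanishing fourth, and two, `i` and `j`, satisfy `s i = -s j`, so `t = s ∘ swap i j`.
  rcases hsign 0 with h0 | h0 <;> rcases hsign 1 with h1 | h1 <;>
    rcases hsign 2 with h2 | h2 <;> rcases hsign 3 with h3 | h3 <;>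
    first
    | (refine ⟨1, 1, .inl rfl, fun i => ?_⟩; fin_cases i <;>
        simp only [Fin.zero_eta, Fin.mk_one, Fin.reduceFinMk, Fin.isValue,
          Equiv.Perm.one_apply] <;> linarith)
    | (refine ⟨1, -1, .inr rfl, fun i => ?_⟩; fin_cases i <;>
        simp only [Fin.zero_eta, Fin.mk_one, Fin.reduceFinMk, Fin.isValue,
          Equiv.Perm.one_apply] <;> linarith)
    | (refine ⟨Equiv.swap 0 1, 1, .inl rfl, fun i => ?_⟩; fin_cases i <;>
        simp only [Fin.zero_eta, Fin.mk_one, Fin.reduceFinMk, Fin.isValue, Equiv.swap_apply_def,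
          Fin.reduceEq, ↓reduceIte] <;> linarith)
    | (refine ⟨Equiv.swap 0 2, 1, .inl rfl, fun i => ?_⟩; fin_cases i <;>
        simp only [Fin.zero_eta, Fin.mk_one, Fin.reduceFinMk, Fin.isValue, Equiv.swap_apply_def,
          Fin.reduceEq, ↓reduceIte] <;> linarith)
    | (refine ⟨Equiv.swap 0 3, 1, .inl rfl, fun i => ?_⟩; fin_cases i <;>
        simp only [Fin.zero_eta, Fin.mk_one, Fin.reduceFinMk, Fin.isValue, Equiv.swap_apply_def,
          Fin.reduceEq, ↓reduceIte] <;> linarith)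
    | (refine ⟨Equiv.swap 1 2, 1, .inl rfl, fun i => ?_⟩; fin_cases i <;>
        simp only [Fin.zero_eta, Fin.mk_one, Fin.reduceFinMk, Fin.isValue, Equiv.swap_apply_def,
          Fin.reduceEq, ↓reduceIte] <;> linarith)
    | (refine ⟨Equiv.swap 1 3, 1, .inl rfl, fun i => ?_⟩; fin_cases i <;>
        simp only [Fin.zero_eta, Fin.mk_one, Fin.reduceFinMk, Fin.isValue, Equiv.swap_apply_def,
          Fin.reduceEq, ↓reduceIte] <;> linarith)
    | (refine ⟨Equiv.swap 2 3, 1, .inl rfl, fun i => ?_⟩; fin_cases i <;>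
        simp only [Fin.zero_eta, Fin.mk_one, Fin.reduceFinMk, Fin.isValue, Equiv.swap_apply_def,
          Fin.reduceEq, ↓reduceIte] <;> linarith)

theorem exists_perm_eq_smul_of_map_sq_eq {s t : Fin 4 → ℝ} (hs : ∑ i, s i = 0)
    (ht : ∑ i, t i = 0)
    (h : univ.val.map (fun i => s i ^ 2) = univ.val.map (fun i => t i ^ 2)) :
    ∃ (τ : Equiv.Perm (Fin 4)) (ε : ℝ), (ε = 1 ∨ ε = -1) ∧ t = ε • (s ∘ τ) := by
  obtain ⟨σ, hσ⟩ := exists_perm_comp_eq_of_map_univ_eq h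
  obtain ⟨τ, ε, hε, hτ⟩ := exists_perm_eq_mul_of_sq_eq (s := s ∘ σ)
    (by rwa [Function.comp_def, Equiv.sum_comp]) ht fun i => (congrFun hσ i).symm
  exact ⟨σ * τ, ε, hε, funext hτ⟩

theorem Module.Basis.exists_linearMap_comp_eq {ι R M : Type*} [Fintype ι] [DecidableEq ι]
    [CommRing R] [AddCommGroup M] [Module R M] (e : Basis ι R M) {v : ι → M}
    (hv : IsUnit (e.det v)) (w : ι → M) :
    ∃ f : M →ₗ[R] M, f ∘ v = w ∧ LinearMap.det f * e.det v = e.det w := by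
  obtain ⟨hli, hspan⟩ := e.is_basis_iff_det.mpr hv
  set b := Basis.mk hli hspan.ge
  have hfv : b.constr R w ∘ v = w := funext fun i => by
    simpa [b] using b.constr_basis R w i
  exact ⟨b.constr R w, hfv, by rw [← e.det_comp, hfv]⟩

theorem map_sub_eq_of_sum_smul_eq_zero {ι K V W : Type*} [Fintype ι] [Field K]
    [AddCommGroup V] [Module K V] [AddCommGroup W] [Module K W] (f : V →ₗ[K] W)
    {P : ι → V} {Q : ι → W} {u : ι → K} (hu : ∑ i, u i = 0) (hP : ∑ i, u i • P i = 0)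
    (hQ : ∑ i, u i • Q i = 0) {a m : ι} (hm : u m ≠ 0)
    (hf : ∀ i ≠ m, f (P i - P a) = Q i - Q a) :
    f (P m - P a) = Q m - Q a := by
  have hsum : ∑ i, u i • (f (P i - P a) - (Q i - Q a)) = 0 := by
    simp only [smul_sub, sum_sub_distrib, ← map_smul, ← map_sum, ← sum_smul, hu, hP, hQ,
      zero_smul, sub_zero, map_zero]
  rw [sum_eq_single m (fun i _ hi => by rw [hf i hi, sub_self, smul_zero])
    (by simp)] at hsum
  exact sub_eq_zero.mp ((smul_eq_zero.mp hsum).resolve_left hm)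

theorem exists_eq_smul_of_det_eq_zero {v w : Fin 2 → ℝ} (hv : v ≠ 0)
    (h : v 0 * w 1 - v 1 * w 0 = 0) : ∃ r : ℝ, w = r • v := by
  have hnorm : v 0 ^ 2 + v 1 ^ 2 ≠ 0 := by
    contrapose! hv
    obtain ⟨h0, h1⟩ := (add_eq_zero_iff_of_nonneg (sq_nonneg _) (sq_nonneg _)).mp hv
    exact funext (Fin.forall_fin_two.mpr ⟨pow_eq_zero_iff two_ne_zero |>.mp h0,
      pow_eq_zero_iff two_ne_zero |>.mp h1⟩)
  refine ⟨(v 0 * w 0 + v 1 * w 1) / (v 0 ^ 2 + v 1 ^ 2),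
    funext (Fin.forall_fin_two.mpr ⟨?_, ?_⟩)⟩ <;>
    rw [Pi.smul_apply, smul_eq_mul, div_mul_eq_mul_div, eq_div_iff hnorm]
  · linear_combination (-v 1) * h
  · linear_combination v 0 * h

theorem collinear_range_of_signedArea_eq_zero {n : ℕ} (P : Fin n → Fin 2 → ℝ) (i₀ : Fin n)
    (h : ∀ j k, signedArea P i₀ j k = 0) : Collinear ℝ (Set.range P) := by
  by_cases hconst : ∀ j, P j = P i₀
  · refine (collinear_singleton ℝ (P i₀)).subset ?_
    rintro _ ⟨j, rfl⟩
    exact hconst j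
  push Not at hconst
  obtain ⟨j, hj⟩ := hconst
  rw [collinear_iff_of_mem (Set.mem_range_self i₀)]
  refine ⟨P j - P i₀, ?_⟩
  rintro _ ⟨k, rfl⟩
  obtain ⟨r, hr⟩ := exists_eq_smul_of_det_eq_zero (sub_ne_zero.mpr hj)
    (w := P k - P i₀) (by simpa only [signedArea, Pi.sub_apply] using h j k)
  exact ⟨r, by rw [vadd_eq_add, ← hr, sub_add_cancel]⟩

theorem signedArea_eq_det {n : ℕ} (P : Fin n → Fin 2 → ℝ) (i j k : Fin n) :
    signedArea P i j k = (Pi.basisFun ℝ (Fin 2)).det ![P j - P i, P k - P i] := by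
  rw [Module.Basis.det_apply, Matrix.det_fin_two]
  simp [Module.Basis.toMatrix_apply, signedArea, mul_comm]

-- The signed area of the triangle opposite `R m`, oriented so that the four coefficients form an
-- affine dependency of the points.
def dependencyCoeffs (R : Fin 4 → Fin 2 → ℝ) : Fin 4 → ℝ :=
  ![signedArea R 1 3 2, signedArea R 0 2 3, signedArea R 0 3 1, signedArea R 0 1 2]

theorem sum_dependencyCoeffs (R : Fin 4 → Fin 2 → ℝ) : ∑ i, dependencyCoeffs R i = 0 := by
  simp only [Fin.sum_univ_four, dependencyCoeffs, Matrix.cons_val, signedArea]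
  ring

theorem sum_dependencyCoeffs_smul (R : Fin 4 → Fin 2 → ℝ) :
    ∑ i, dependencyCoeffs R i • R i = 0 := by
  ext x
  simp only [Finset.sum_apply, Pi.smul_apply, smul_eq_mul, Fin.sum_univ_four, dependencyCoeffs,
    Matrix.cons_val, signedArea, Pi.zero_apply]
  fin_cases x <;> simp only [Fin.zero_eta, Fin.mk_one] <;> ring

theorem dependencyCoeffs_comp_perm (R : Fin 4 → Fin 2 → ℝ) (σ : Equiv.Perm (Fin 4)) :
    dependencyCoeffs (R ∘ σ) = (Equiv.Perm.sign σ : ℝ) • (dependencyCoeffs R ∘ σ) := by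
  induction σ using Submonoid.induction_of_closure_eq_top_right
    (Equiv.Perm.mclosure_swap_castSucc_succ 3) generalizing R with
  | one => simp
  | mul_right σ τ hτ ih =>
    obtain ⟨k, rfl⟩ := hτ
    have hswap (R : Fin 4 → Fin 2 → ℝ) :
        dependencyCoeffs (R ∘ Equiv.swap k.castSucc k.succ) =
          -(dependencyCoeffs R ∘ Equiv.swap k.castSucc k.succ) := by
      ext i
      fin_cases k <;> fin_cases i <;>
        simp only [dependencyCoeffs, signedArea, Function.comp_apply, Pi.neg_apply,
          Equiv.swap_apply_def, Matrix.cons_val, Fin.isValue, Fin.reduceFinMk, Fin.reduceCastSucc,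
          Fin.reduceSucc, Fin.reduceEq, ↓reduceIte] <;> ring
    rw [Equiv.Perm.coe_mul, ← Function.comp_assoc, hswap, ih]
    ext i
    simp [Equiv.Perm.sign_mul, Equiv.Perm.sign_swap (Fin.castSucc_lt_succ (i := k)).ne]

theorem exists_signedArea_eq_dependencyCoeffs (m : Fin 4) :
    ∃ a b c : Fin 4, (∀ i ≠ m, i = a ∨ i = b ∨ i = c) ∧
      ∀ R, signedArea R a b c = dependencyCoeffs R m := by
  fin_cases m
  exacts [⟨1, 3, 2, by decide, fun _ => rfl⟩, ⟨0, 2, 3, by decide, fun _ => rfl⟩,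
    ⟨0, 3, 1, by decide, fun _ => rfl⟩, ⟨0, 1, 2, by decide, fun _ => rfl⟩]

theorem sqAreaMultiset_eq_map_dependencyCoeffs_sq (R : Fin 4 → Fin 2 → ℝ) :
    sqAreaMultiset R = univ.val.map fun i => dependencyCoeffs R i ^ 2 := by
  have htriples :
      (univ.filter fun p : Fin 4 × Fin 4 × Fin 4 => p.1 < p.2.1 ∧ p.2.1 < p.2.2).val =
        ↑([(1, 2, 3), (0, 2, 3), (0, 1, 3), (0, 1, 2)] : List (Fin 4 × Fin 4 × Fin 4)) := by
    decide
  rw [sqAreaMultiset, htriples, Fin.univ_val_map, Multiset.map_coe]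
  congr 1
  simp only [List.map_cons, List.map_nil, List.ofFn_succ, List.ofFn_zero, dependencyCoeffs,
    Matrix.cons_val_zero, Matrix.cons_val_succ, Matrix.cons_val_fin_one, List.cons.injEq,
    and_true, true_and]
  constructor <;> (unfold signedArea; ring)

theorem dependencyCoeffs_ne_zero_of_not_collinear {R : Fin 4 → Fin 2 → ℝ}
    (h : ¬Collinear ℝ (Set.range R)) : dependencyCoeffs R ≠ 0 := by
  contrapose! h
  have h023 : signedArea R 0 2 3 = 0 := congrFun h 1
  have h031 : signedArea R 0 3 1 = 0 := congrFun h 2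
  have h012 : signedArea R 0 1 2 = 0 := congrFun h 3
  refine collinear_range_of_signedArea_eq_zero R 0 fun j k => ?_
  unfold signedArea at *
  fin_cases j <;> fin_cases k <;>
    simp only [Fin.zero_eta, Fin.mk_one, Fin.reduceFinMk, Fin.isValue] <;> linarith

theorem exists_linearEquiv_of_dependencyCoeffs_eq_smul {P Q : Fin 4 → Fin 2 → ℝ}
    (hP : ¬Collinear ℝ (Set.range P)) {δ : ℝ} (hδ : δ ≠ 0)
    (hPQ : dependencyCoeffs Q = δ • dependencyCoeffs P) :
    ∃ (φ : (Fin 2 → ℝ) ≃ₗ[ℝ] (Fin 2 → ℝ)) (v : Fin 2 → ℝ),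
      LinearMap.det (φ : (Fin 2 → ℝ) →ₗ[ℝ] (Fin 2 → ℝ)) = δ ∧ ∀ i, Q i = φ (P i + v) := by
  obtain ⟨m, hm⟩ := Function.ne_iff.mp (dependencyCoeffs_ne_zero_of_not_collinear hP)
  obtain ⟨a, b, c, hcover, habc⟩ := exists_signedArea_eq_dependencyCoeffs m
  have hPabc : IsUnit ((Pi.basisFun ℝ (Fin 2)).det ![P b - P a, P c - P a]) := by
    rw [← signedArea_eq_det, habc]
    exact hm.isUnit
  obtain ⟨f, hf, hdet⟩ :=
    (Pi.basisFun ℝ (Fin 2)).exists_linearMap_comp_eq hPabc ![Q b - Q a, Q c - Q a]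
  rw [← signedArea_eq_det, ← signedArea_eq_det, habc, habc, hPQ, Pi.smul_apply, smul_eq_mul]
    at hdet
  have hdetf : LinearMap.det f = δ := mul_right_cancel₀ hm hdet
  have hQ : ∑ i, dependencyCoeffs P i • Q i = 0 := by
    have := sum_dependencyCoeffs_smul Q
    simp only [hPQ, Pi.smul_apply, smul_eq_mul, mul_smul, ← smul_sum] at this
    exact (smul_eq_zero.mp this).resolve_left hδ
  have hfi (i : Fin 4) (hi : i ≠ m) : f (P i - P a) = Q i - Q a := by
    rcases hcover i hi with rfl | rfl | rfl
    · simp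
    · exact congrFun hf 0
    · exact congrFun hf 1
  have hfm := map_sub_eq_of_sum_smul_eq_zero f (sum_dependencyCoeffs P)
    (sum_dependencyCoeffs_smul P) hQ hm hfi
  set φ := f.equivOfDetNeZero (hdetf ▸ hδ)
  refine ⟨φ, φ.symm (Q a) - P a, hdetf, fun i => ?_⟩
  have hfP : f (P i - P a) = Q i - Q a := if hi : i = m then hi ▸ hfm else hfi i hi
  calc Q i = f (P i - P a) + Q a := by rw [hfP, sub_add_cancel]
    _ = φ (P i + (φ.symm (Q a) - P a)) := by
      rw [add_sub_left_comm, map_add, LinearEquiv.apply_symm_apply, add_comm]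
      rfl

end

theorem stmt14 (P Q : Fin 4 → Fin 2 → ℝ)
    (hncol : ¬ Collinear ℝ (Set.range P))
    (h : sqAreaMultiset P = sqAreaMultiset Q) :
    ∃ (π : Equiv.Perm (Fin 4)) (φ : (Fin 2 → ℝ) ≃ₗ[ℝ] (Fin 2 → ℝ)) (v : Fin 2 → ℝ),
      (LinearMap.det (φ : (Fin 2 → ℝ) →ₗ[ℝ] (Fin 2 → ℝ)) = 1 ∨
       LinearMap.det (φ : (Fin 2 → ℝ) →ₗ[ℝ] (Fin 2 → ℝ)) = -1) ∧
      ∀ i, Q i = φ (P (π i) + v) := by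
  obtain ⟨π, ε, hε, hQ⟩ := exists_perm_eq_smul_of_map_sq_eq (sum_dependencyCoeffs P)
    (sum_dependencyCoeffs Q) (by rw [← sqAreaMultiset_eq_map_dependencyCoeffs_sq,
      ← sqAreaMultiset_eq_map_dependencyCoeffs_sq, h])
  set δ : ℝ := ε * Equiv.Perm.sign π
  have hδ : δ = 1 ∨ δ = -1 := by
    rcases hε with rfl | rfl <;>
      rcases Int.units_eq_one_or (Equiv.Perm.sign π) with hsign | hsign <;> simp [δ, hsign]
  have hQ' : dependencyCoeffs Q = δ • dependencyCoeffs (P ∘ π) := by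
    rw [hQ, dependencyCoeffs_comp_perm, smul_smul, mul_assoc, ← Int.cast_mul, ← Units.val_mul,
      Int.units_mul_self, Units.val_one, Int.cast_one, mul_one]
  obtain ⟨φ, v, hdet, hφ⟩ := exists_linearEquiv_of_dependencyCoeffs_eq_smul
    (by rwa [EquivLike.range_comp]) (by rcases hδ with hδ | hδ <;> simp [hδ]) hQ'
  exact ⟨π, φ, v, hdet ▸ hδ, hφ⟩
end
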